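/- (Lemma 3.8, identity (3.22) with the exponential factors removed.) Suppose τ₁, τ₂ : (ℕ → ℂ) × (ℕ → ℂ) → ℂ are continuous, shift-smooth and nowhere vanishing, and that (τ₁, τ₂) satisfies the second differential Fay identity. Fix nonzero γ, z ∈ ℂ and define B : (ℕ → ℂ) × (ℕ → ℂ) → ℂ by B(x, y) = − τ₁(x − [z⁻¹], y + [γ⁻¹]) / τ₂(x, y) + τ₁(x − [z⁻¹], y) · τ₁(x, y + [γ⁻¹]) / ( τ₁(x, y) · τ₂(x, y) ). Then for all x, y : ℕ → ℂ: ( τ₁(x, y + [γ⁻¹]) / τ₂(x, y) ) · ( ∂₂τ₁(x − [z⁻¹], y) · τ₁(x, y) − τ₁(x − [z⁻¹], y) · ∂₂τ₁(x, y) ) / τ₁(x, y)² = − γ · B(x, y) + deriv (fun ε : ℂ => B(x, y + [ε])) 0. (This is the paper's formula w₂†(γ) ∂₂ w₁(z) = ∂₂( e^{−ξ(t₂;γ)+ξ(t₁;z)} · B ) for the Baker-Akhiezer functions w₁ = (τ₁(t₁−[z⁻¹],t₂)/τ₁) e^{ξ(t₁;z)} and w₂† = (τ₁(t₁,t₂+[γ⁻¹])/τ₂)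 e^{−ξ(t₂;γ)}, with the exponential factors cancelled.) -/

import Mathlib

/-- The shift `[s] : ℕ → ℂ`, `[s](k) = s^(k+1)/(k+1)`, representing the
sequence `(s, s²/2, s³/3, …)` of time variables. -/
noncomputable def sh (s : ℂ) : ℕ → ℂ := fun k => s ^ (k + 1) / ((k : ℂ) + 1)

/-- `∂₁ f (x, y)`: derivative of `s ↦ f(x + [s], y)` at `s = 0`. -/
noncomputable def d1 (f : (ℕ → ℂ) × (ℕ → ℂ) → ℂ) (x y : ℕ → ℂ) : ℂ :=
  deriv (fun s : ℂ => f (x + sh s, y)) 0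

/-- `∂₂ f (x, y)`: derivative of `s ↦ f(x, y + [s])` at `s = 0`. -/
noncomputable def d2 (f : (ℕ → ℂ) × (ℕ → ℂ) → ℂ) (x y : ℕ → ℂ) : ℂ :=
  deriv (fun s : ℂ => f (x, y + sh s)) 0

/-- `f` is shift-smooth: for every `(x, y)` the maps `s ↦ f(x + [s], y)` and
`s ↦ f(x, y + [s])` are differentiable on all of ℂ, and the maps
`(s, x, y) ↦ (d/ds) f(x + [s], y)` and `(s, x, y) ↦ (d/ds) f(x, y + [s])`
are jointly continuous. -/
def ShiftSmooth (f : (ℕ → ℂ) × (ℕ → ℂ) → ℂ) : Prop :=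
  (∀ x y : ℕ → ℂ, Differentiable ℂ (fun s : ℂ => f (x + sh s, y))) ∧
  (∀ x y : ℕ → ℂ, Differentiable ℂ (fun s : ℂ => f (x, y + sh s))) ∧
  Continuous (fun q : ℂ × ((ℕ → ℂ) × (ℕ → ℂ)) =>
    deriv (fun s : ℂ => f (q.2.1 + sh s, q.2.2)) q.1) ∧
  Continuous (fun q : ℂ × ((ℕ → ℂ) × (ℕ → ℂ)) =>
    deriv (fun s : ℂ => f (q.2.1, q.2.2 + sh s)) q.1)

/-- The second differential Fay identity (equation (3.8) of the paper). -/
def DiffFay2 (τ₁ τ₂ : (ℕ → ℂ) × (ℕ → ℂ) → ℂ) : Prop :=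
  ∀ x y : ℕ → ℂ, ∀ a b : ℂ, a ≠ 0 → b ≠ 0 →
    d2 τ₁ (x - sh a) (y + sh b) * τ₂ (x, y)
      - τ₁ (x - sh a, y + sh b) * d2 τ₂ x y
    = (1 / b) * (τ₁ (x - sh a, y + sh b) * τ₂ (x, y)
        - τ₂ (x, y + sh b) * τ₁ (x - sh a, y))

lemma sh_zero : sh 0 = 0 := by
  funext k; simp [sh]

lemma sh_continuous : Continuous sh := by
  apply continuous_pi; intro k
  unfold sh
  fun_prop (disch := norm_num)

/-- The limit of the Fay identity as `a → 0`. -/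
lemma fay_limit (τ₁ τ₂ : (ℕ → ℂ) × (ℕ → ℂ) → ℂ)
    (hc1 : Continuous τ₁) (hs1 : ShiftSmooth τ₁)
    (hFay : DiffFay2 τ₁ τ₂) :
    ∀ x y : ℕ → ℂ, ∀ b : ℂ, b ≠ 0 →
    d2 τ₁ x (y + sh b) * τ₂ (x, y) - τ₁ (x, y + sh b) * d2 τ₂ x y
      = (1 / b) * (τ₁ (x, y + sh b) * τ₂ (x, y)
          - τ₂ (x, y + sh b) * τ₁ (x, y)) := by
  intro x y b hb
  set G : ℂ → ℂ := fun a =>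
    d2 τ₁ (x - sh a) (y + sh b) * τ₂ (x, y)
      - τ₁ (x - sh a, y + sh b) * d2 τ₂ x y
      - (1 / b) * (τ₁ (x - sh a, y + sh b) * τ₂ (x, y)
          - τ₂ (x, y + sh b) * τ₁ (x - sh a, y)) with hG
  have hxc : Continuous (fun a : ℂ => x - sh a) :=
    continuous_const.sub sh_continuous
  have hcd2 : Continuous (fun a : ℂ => d2 τ₁ (x - sh a) (y + sh b)) := by
    have h := hs1.2.2.2
    exact h.comp (by fun_prop : Continuous
      (fun a : ℂ => ((0 : ℂ), ((x - sh a), (y + sh b)))))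
  have hGc : Continuous G := by
    rw [hG]
    apply Continuous.sub
    · exact (hcd2.mul continuous_const).sub
        ((hc1.comp (hxc.prodMk continuous_const)).mul continuous_const)
    · exact continuous_const.mul
        (((hc1.comp (hxc.prodMk continuous_const)).mul continuous_const).sub
          (continuous_const.mul (hc1.comp (hxc.prodMk continuous_const))))
  have h0 : Set.EqOn G (fun _ => (0 : ℂ)) {0}ᶜ := by
    intro a ha
    have := hFay x y a b (by simpa using ha) hb
    simp only [hG]
    linear_combination this
  have hGeq : G = fun _ => (0 : ℂ) :=
    Continuous.ext_on (dense_compl_singleton (0 : ℂ)) hGc continuous_const h0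
  have hg0 : G 0 = 0 := by rw [hGeq]
  have := hg0
  rw [hG] at this
  simp only [sh_zero, sub_zero] at this
  linear_combination this

/-- Lemma 3.8, identity (3.22), exponential factors removed. -/
theorem asvm_w2dag_d2_w1 (τ₁ τ₂ : (ℕ → ℂ) × (ℕ → ℂ) → ℂ)
    (hc1 : Continuous τ₁) (hc2 : Continuous τ₂)
    (hs1 : ShiftSmooth τ₁) (hs2 : ShiftSmooth τ₂)
    (hn1 : ∀ p : (ℕ → ℂ) × (ℕ → ℂ), τ₁ p ≠ 0)
    (hn2 : ∀ p : (ℕ → ℂ) × (ℕ → ℂ), τ₂ p ≠ 0)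
    (hFay : DiffFay2 τ₁ τ₂)
    (γ z : ℂ) (hγ : γ ≠ 0) (hz : z ≠ 0)
    (B : (ℕ → ℂ) × (ℕ → ℂ) → ℂ)
    (hB : ∀ x y : ℕ → ℂ,
      B (x, y) = - τ₁ (x - sh z⁻¹, y + sh γ⁻¹) / τ₂ (x, y)
        + τ₁ (x - sh z⁻¹, y) * τ₁ (x, y + sh γ⁻¹) / (τ₁ (x, y) * τ₂ (x, y))) :
    ∀ x y : ℕ → ℂ,
      (τ₁ (x, y + sh γ⁻¹) / τ₂ (x, y))
          * (d2 τ₁ (x - sh z⁻¹) y * τ₁ (x, y)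
            - τ₁ (x - sh z⁻¹, y) * d2 τ₁ x y) / τ₁ (x, y) ^ 2
        = - γ * B (x, y) + deriv (fun ε : ℂ => B (x, y + sh ε)) 0 := by
  intro x y
  have ha : (z⁻¹ : ℂ) ≠ 0 := inv_ne_zero hz
  have hb : (γ⁻¹ : ℂ) ≠ 0 := inv_ne_zero hγ
  -- derivative builders
  have key1 : ∀ x' y' : ℕ → ℂ,
      HasDerivAt (fun ε : ℂ => τ₁ (x', y' + sh ε)) (d2 τ₁ x' y') 0 :=
    fun x' y' => ((hs1.2.1 x' y') 0).hasDerivAt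
  have key2 : ∀ x' y' : ℕ → ℂ,
      HasDerivAt (fun ε : ℂ => τ₂ (x', y' + sh ε)) (d2 τ₂ x' y') 0 :=
    fun x' y' => ((hs2.2.1 x' y') 0).hasDerivAt
  have e1 := key1 (x - sh z⁻¹) (y + sh γ⁻¹)
  have e2 := key1 (x - sh z⁻¹) y
  have e3 := key1 x (y + sh γ⁻¹)
  have e4 := key1 x y
  have f1 := key2 x y
  have hy0 : y + sh 0 = y := by rw [sh_zero, add_zero]
  have hyb0 : (y + sh γ⁻¹) + sh 0 = y + sh γ⁻¹ := by rw [sh_zero, add_zero]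
  have hS : τ₂ (x, y + sh 0) ≠ 0 := hn2 _
  have hTS : τ₁ (x, y + sh 0) * τ₂ (x, y + sh 0) ≠ 0 :=
    mul_ne_zero (hn1 _) (hn2 _)
  have H : HasDerivAt
      (fun ε : ℂ => - τ₁ (x - sh z⁻¹, (y + sh γ⁻¹) + sh ε) / τ₂ (x, y + sh ε)
        + τ₁ (x - sh z⁻¹, y + sh ε) * τ₁ (x, (y + sh γ⁻¹) + sh ε)
            / (τ₁ (x, y + sh ε) * τ₂ (x, y + sh ε)))
      (((- d2 τ₁ (x - sh z⁻¹) (y + sh γ⁻¹)) * τ₂ (x, y + sh 0)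
          - (- τ₁ (x - sh z⁻¹, (y + sh γ⁻¹) + sh 0)) * d2 τ₂ x y)
            / τ₂ (x, y + sh 0) ^ 2
        + ((d2 τ₁ (x - sh z⁻¹) y * τ₁ (x, (y + sh γ⁻¹) + sh 0)
            + τ₁ (x - sh z⁻¹, y + sh 0) * d2 τ₁ x (y + sh γ⁻¹))
              * (τ₁ (x, y + sh 0) * τ₂ (x, y + sh 0))
          - τ₁ (x - sh z⁻¹, y + sh 0) * τ₁ (x, (y + sh γ⁻¹) + sh 0)
              * (d2 τ₁ x y * τ₂ (x, y + sh 0) + τ₁ (x, y + sh 0) * d2 τ₂ x y))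
            / (τ₁ (x, y + sh 0) * τ₂ (x, y + sh 0)) ^ 2) 0 :=
    (e1.neg.div f1 hS).add ((e2.mul e3).div (e4.mul f1) hTS)
  have hfun : (fun ε : ℂ => B (x, y + sh ε)) =
      (fun ε : ℂ => - τ₁ (x - sh z⁻¹, (y + sh γ⁻¹) + sh ε) / τ₂ (x, y + sh ε)
        + τ₁ (x - sh z⁻¹, y + sh ε) * τ₁ (x, (y + sh γ⁻¹) + sh ε)
            / (τ₁ (x, y + sh ε) * τ₂ (x, y + sh ε))) := by
    funext ε
    rw [hB x (y + sh ε), add_right_comm y (sh ε) (sh γ⁻¹)]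
  have hderiv := H.deriv
  rw [← hfun] at hderiv
  rw [hderiv, hB x y]
  rw [hy0, hyb0] at *
  -- Fay identity instances
  have hF1 := hFay x y z⁻¹ γ⁻¹ ha hb
  have hF2 := fay_limit τ₁ τ₂ hc1 hs1 hFay x y γ⁻¹ hb
  rw [one_div, inv_inv] at hF1 hF2
  have hT : τ₁ (x, y) ≠ 0 := hn1 _
  have hS' : τ₂ (x, y) ≠ 0 := hn2 _
  set T := τ₁ (x, y) with hT1
  set S := τ₂ (x, y) with hS1
  set Ta := τ₁ (x - sh z⁻¹, y) with hTa1
  set Tb := τ₁ (x, y + sh γ⁻¹) with hTb1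
  set Tab := τ₁ (x - sh z⁻¹, y + sh γ⁻¹) with hTab1
  set Sb := τ₂ (x, y + sh γ⁻¹) with hSb1
  set dT := d2 τ₁ x y with hdT1
  set dS := d2 τ₂ x y with hdS1
  set dTa := d2 τ₁ (x - sh z⁻¹) y with hdTa1
  set dTb := d2 τ₁ x (y + sh γ⁻¹) with hdTb1
  set dTab := d2 τ₁ (x - sh z⁻¹) (y + sh γ⁻¹) with hdTab1
  field_simp
  linear_combination T ^ 2 * hF1 - (T * Ta) * hF2
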